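/- arXiv:math/0107090 — 2 statements merged into one kernel-verified Lean document; each statement's English description precedes it below -/
import Mathlib

section
/- Let T be a bounded linear operator on a separable infinite-dimensional complex Hilbert space H. Then T is quasidiagonal if and only if T = D + K where K is a compact operator and D is a block diagonal operator, i.e., there exists an increasing sequence of finite-rank orthogonal projections converging strongly to the identity, each of which commutes exactly with D. -/
open Filter Topology

section Aux

variable {H : Type} [NormedAddCommGroup H] [InnerProductSpace ℂ H] [CompleteSpace H]

local notation "⟪" x ", " y "⟫" => @inner ℂ _ _ x y

lemma aux_norm_le_one {p : H →L[ℂ] H} (hsa : IsSelfAdjoint p) (hid : IsIdempotentElem p) :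
    ‖p‖ ≤ 1 := by
  refine ContinuousLinearMap.opNorm_le_bound _ zero_le_one (fun x => ?_)
  rw [one_mul]
  have h1 : p (p x) = p x := DFunLike.congr_fun hid x
  have h3 : ⟪p x, p x⟫ = ⟪x, p x⟫ := by
    have := hsa.isSymmetric x (p x)
    simpa [h1] using this
  have h2 : (‖p x‖ : ℝ) ^ 2 = RCLike.re ⟪x, p x⟫ := by
    rw [← h3]; exact (inner_self_eq_norm_sq (𝕜 := ℂ) _).symm
  have h4 : ‖p x‖ ^ 2 ≤ ‖x‖ * ‖p x‖ := by
    calc ‖p x‖ ^ 2 = RCLike.re ⟪x, p x⟫ := h2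
      _ ≤ ‖⟪x, p x⟫‖ := RCLike.re_le_norm _
      _ ≤ ‖x‖ * ‖p x‖ := norm_inner_le_norm _ _
  nlinarith [norm_nonneg (p x), norm_nonneg x]

lemma aux_left (K : H →L[ℂ] H) (hK : IsCompactOperator ⇑K) (P : ℕ → H →L[ℂ] H)
    (hbd : ∀ n, ‖P n‖ ≤ 1) (hst : ∀ x : H, Tendsto (fun n => P n x) atTop (𝓝 x)) :
    Tendsto (fun n => ‖P n * K - K‖) atTop (𝓝 0) := by
  rw [Metric.tendsto_atTop]
  intro ε hε
  have hK' : IsCompactOperator ⇑(K : H →ₗ[ℂ] H) := hK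
  have hM : IsCompact (closure (⇑(K : H →ₗ[ℂ] H) '' Metric.closedBall 0 1)) :=
    hK'.isCompact_closure_image_of_bounded Metric.isBounded_closedBall
  obtain ⟨t, htfin, hcover⟩ :=
    (Metric.totallyBounded_iff).mp hM.totallyBounded (ε/4) (by positivity)
  have hev : ∀ᶠ n in atTop, ∀ y ∈ t, ‖P n y - y‖ < ε/4 := by
    rw [eventually_all_finite htfin]
    intro y _
    have h0 : Tendsto (fun n => P n y - y) atTop (𝓝 0) := by
      simpa using (hst y).sub (tendsto_const_nhds (x := y))
    have h1 : Tendsto (fun n => ‖P n y - y‖) atTop (𝓝 0) := by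
      simpa using h0.norm
    exact h1.eventually_lt_const (by positivity)
  rw [eventually_atTop] at hev
  obtain ⟨N, hN⟩ := hev
  refine ⟨N, fun n hn => ?_⟩
  rw [Real.dist_eq, sub_zero, abs_of_nonneg (norm_nonneg _)]
  have key : ∀ x : H, ‖(P n * K - K) x‖ ≤ (3 * (ε/4)) * ‖x‖ := by
    intro x
    rcases eq_or_ne x 0 with rfl | hx
    · simp
    · have hxpos : (0:ℝ) < ‖x‖ := norm_pos_iff.mpr hx
      set u : H := (‖x‖⁻¹ : ℝ) • x with hu
      have hun : ‖u‖ = 1 := by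
        rw [hu, norm_smul]
        simp [abs_of_pos (inv_pos.mpr hxpos), inv_mul_cancel₀ hxpos.ne']
      have humem : K u ∈ closure (⇑(K : H →ₗ[ℂ] H) '' Metric.closedBall 0 1) := by
        apply subset_closure
        exact ⟨u, by simp [Metric.mem_closedBall, dist_zero_right, hun.le], rfl⟩
      obtain ⟨y, hyt, hyb⟩ := Set.mem_iUnion₂.mp (hcover humem)
      rw [Metric.mem_ball] at hyb
      have hest : ‖(P n * K - K) u‖ ≤ 3 * (ε/4) := by
        have hdecomp : (P n * K - K) u = P n (K u - y) + (P n y - y) + (y - K u) := by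
          simp only [ContinuousLinearMap.sub_apply, ContinuousLinearMap.mul_apply, map_sub]
          abel
        rw [hdecomp]
        have e1 : ‖P n (K u - y)‖ ≤ ε/4 := by
          calc ‖P n (K u - y)‖ ≤ ‖P n‖ * ‖K u - y‖ := (P n).le_opNorm _
            _ ≤ 1 * (ε/4) := by
                apply mul_le_mul (hbd n) ?_ (norm_nonneg _) zero_le_one
                rw [← dist_eq_norm]; exact hyb.le
            _ = ε/4 := one_mul _
        have e2 : ‖P n y - y‖ ≤ ε/4 := (hN n hn y hyt).le
        have e3 : ‖y - K u‖ ≤ ε/4 := by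
          rw [← dist_eq_norm, dist_comm]
          exact hyb.le
        calc ‖P n (K u - y) + (P n y - y) + (y - K u)‖
            ≤ ‖P n (K u - y) + (P n y - y)‖ + ‖y - K u‖ := norm_add_le _ _
          _ ≤ ‖P n (K u - y)‖ + ‖P n y - y‖ + ‖y - K u‖ := by
              gcongr; exact norm_add_le _ _
          _ ≤ ε/4 + ε/4 + ε/4 := by gcongr
          _ = 3 * (ε/4) := by ring
      have hxu : (P n * K - K) x = (‖x‖ : ℝ) • ((P n * K - K) u) := by
        rw [← ContinuousLinearMap.map_smul_of_tower, hu, smul_smul,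
          mul_inv_cancel₀ hxpos.ne', one_smul]
      rw [hxu, norm_smul]
      rw [Real.norm_of_nonneg hxpos.le]
      rw [mul_comm]
      exact mul_le_mul_of_nonneg_right hest hxpos.le
  calc ‖P n * K - K‖ ≤ 3 * (ε/4) :=
        ContinuousLinearMap.opNorm_le_bound _ (by positivity) key
    _ < ε := by linarith

lemma aux_right (K : H →L[ℂ] H) (hK : IsCompactOperator ⇑K) (P : ℕ → H →L[ℂ] H)
    (hsa : ∀ n, IsSelfAdjoint (P n)) (hbd : ∀ n, ‖P n‖ ≤ 1)
    (hst : ∀ x : H, Tendsto (fun n => P n x) atTop (𝓝 x)) :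
    Tendsto (fun n => ‖K * P n - K‖) atTop (𝓝 0) := by
  set C : H →L[ℂ] H := star K * K with hC
  have hCc : IsCompactOperator ⇑C := hK.continuous_comp (star K).continuous
  have hCsa : IsSelfAdjoint C := IsSelfAdjoint.star_mul_self K
  have h2 : Tendsto (fun n => ‖P n * C - C‖) atTop (𝓝 0) := aux_left C hCc P hbd hst
  have key : ∀ n, ‖K * P n - K‖ ≤ 2 * Real.sqrt ‖P n * C - C‖ := by
    intro n
    have hb : (0:ℝ) ≤ ‖P n * C - C‖ := norm_nonneg _
    refine ContinuousLinearMap.opNorm_le_bound _ (by positivity) (fun x => ?_)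
    set y : H := P n x - x with hy
    have hxy : (K * P n - K) x = K y := by
      simp [hy, ContinuousLinearMap.sub_apply, ContinuousLinearMap.mul_apply, map_sub]
    have hyn : ‖y‖ ≤ 2 * ‖x‖ := by
      calc ‖P n x - x‖ ≤ ‖P n x‖ + ‖x‖ := norm_sub_le _ _
        _ ≤ ‖P n‖ * ‖x‖ + ‖x‖ := by gcongr; exact (P n).le_opNorm x
        _ ≤ 1 * ‖x‖ + ‖x‖ := by gcongr; exact hbd n
        _ = 2 * ‖x‖ := by ring
    have h3 : (‖K y‖ : ℝ) ^ 2 = RCLike.re ⟪y, C y⟫ := by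
      rw [← inner_self_eq_norm_sq (𝕜 := ℂ)]
      congr 1
      have : ⟪K y, K y⟫ = ⟪y, ContinuousLinearMap.adjoint K (K y)⟫ :=
        (ContinuousLinearMap.adjoint_inner_right K y (K y)).symm
      rw [this, hC]
      rw [ContinuousLinearMap.star_eq_adjoint]
      rfl
    have h5 : C y = (C * P n - C) x := by
      simp [hy, ContinuousLinearMap.sub_apply, ContinuousLinearMap.mul_apply, map_sub]
    have h7 : ‖C * P n - C‖ = ‖P n * C - C‖ := by
      rw [← norm_star]
      congr 1
      rw [star_sub, star_mul, (hsa n).star_eq, hCsa.star_eq]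
    have h6 : ‖C y‖ ≤ ‖P n * C - C‖ * ‖x‖ := by
      rw [h5, ← h7]; exact (C * P n - C).le_opNorm x
    have h4 : RCLike.re ⟪y, C y⟫ ≤ ‖y‖ * ‖C y‖ :=
      le_trans (RCLike.re_le_norm _) (norm_inner_le_norm _ _)
    have h8 : ‖K y‖ ^ 2 ≤ 2 * ‖P n * C - C‖ * ‖x‖ ^ 2 := by
      have : ‖y‖ * ‖C y‖ ≤ (2 * ‖x‖) * (‖P n * C - C‖ * ‖x‖) := by
        apply mul_le_mul hyn h6 (norm_nonneg _) (by positivity)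
      nlinarith [h3, h4]
    have h9 : ‖K y‖ ≤ 2 * Real.sqrt ‖P n * C - C‖ * ‖x‖ := by
      have h10 : (2 * Real.sqrt ‖P n * C - C‖ * ‖x‖) ^ 2
          = 4 * ‖P n * C - C‖ * ‖x‖ ^ 2 := by
        rw [mul_pow, mul_pow, Real.sq_sqrt hb]; ring
      have h11 : ‖K y‖ ^ 2 ≤ (2 * Real.sqrt ‖P n * C - C‖ * ‖x‖) ^ 2 := by
        rw [h10]; nlinarith [h8, hb, sq_nonneg (‖x‖ : ℝ)]
      have h12 : (0:ℝ) ≤ 2 * Real.sqrt ‖P n * C - C‖ * ‖x‖ := by positivity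
      nlinarith [norm_nonneg (K y)]
    rw [hxy]; exact h9
  have hsq : Tendsto (fun n => 2 * Real.sqrt ‖P n * C - C‖) atTop (𝓝 0) := by
    have h0 : Tendsto (fun n => Real.sqrt ‖P n * C - C‖) atTop (𝓝 (Real.sqrt 0)) :=
      (Real.continuous_sqrt.tendsto 0).comp h2
    rw [Real.sqrt_zero] at h0
    simpa using h0.const_mul 2
  exact squeeze_zero (fun n => norm_nonneg _) key hsq

lemma aux_finrank_compact (f : H →L[ℂ] H)
    (hf : FiniteDimensional ℂ (LinearMap.range (f : H →ₗ[ℂ] H))) : IsCompactOperator ⇑f := by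
  set S := LinearMap.range (f : H →ₗ[ℂ] H) with hS
  haveI : FiniteDimensional ℂ S := hf
  haveI : ProperSpace S := FiniteDimensional.proper ℂ S
  refine ⟨Subtype.val '' (Metric.closedBall (0 : S) ‖f‖), ?_, ?_⟩
  · exact (isCompact_closedBall _ _).image continuous_subtype_val
  · refine mem_of_superset (Metric.closedBall_mem_nhds (0 : H) one_pos) (fun x hx => ?_)
    rw [Metric.mem_closedBall, dist_zero_right] at hx
    refine ⟨⟨f x, LinearMap.mem_range_self _ x⟩, ?_, rfl⟩
    rw [Metric.mem_closedBall, dist_zero_right]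
    show ‖(⟨f x, _⟩ : S)‖ ≤ ‖f‖
    have : ‖(⟨f x, LinearMap.mem_range_self _ x⟩ : S)‖ = ‖f x‖ := rfl
    rw [this]
    calc ‖f x‖ ≤ ‖f‖ * ‖x‖ := f.le_opNorm x
      _ ≤ ‖f‖ * 1 := by gcongr
      _ = ‖f‖ := mul_one _

lemma aux_mono {P : ℕ → H →L[ℂ] H} (hid : ∀ n, IsIdempotentElem (P n))
    (hm : ∀ n, P (n+1) * P n = P n) :
    ∀ n m, n ≤ m → P m * P n = P n := by
  intro n m h
  induction m, h using Nat.le_induction with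
  | base => exact hid n
  | succ m hnm ih =>
    calc P (m+1) * P n = P (m+1) * (P m * P n) := by rw [ih]
      _ = (P (m+1) * P m) * P n := by rw [mul_assoc]
      _ = P m * P n := by rw [hm m]
      _ = P n := ih

lemma aux_mono' {P : ℕ → H →L[ℂ] H} (hsa : ∀ n, IsSelfAdjoint (P n))
    (hid : ∀ n, IsIdempotentElem (P n)) (hm : ∀ n, P (n+1) * P n = P n) :
    ∀ n m, n ≤ m → P n * P m = P n := by
  intro n m h
  have h1 := aux_mono hid hm n m h
  calc P n * P m = star (star (P m) * star (P n)) := by rw [← star_mul, star_star]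
    _ = star (P m * P n) := by rw [(hsa n).star_eq, (hsa m).star_eq]
    _ = P n := by rw [h1, (hsa n).star_eq]

end Aux

/-- A bounded operator `T` on a Hilbert space is quasidiagonal if there is an
increasing sequence of finite-rank orthogonal projections converging strongly to
the identity which asymptotically commutes with `T` in norm. -/
def IsQuasidiagonal {H : Type} [NormedAddCommGroup H] [InnerProductSpace ℂ H]
    [CompleteSpace H] (T : H →L[ℂ] H) : Prop :=
  ∃ P : ℕ → H →L[ℂ] H,
    (∀ n, IsSelfAdjoint (P n)) ∧
    (∀ n, IsIdempotentElem (P n)) ∧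
    (∀ n, FiniteDimensional ℂ (LinearMap.range (P n : H →ₗ[ℂ] H))) ∧
    (∀ n, P (n + 1) * P n = P n) ∧
    (∀ x : H, Tendsto (fun n => P n x) atTop (𝓝 x)) ∧
    Tendsto (fun n => ‖P n * T - T * P n‖) atTop (𝓝 0)

/-- A bounded operator `D` on a Hilbert space is block diagonal if there is an
increasing sequence of finite-rank orthogonal projections converging strongly to
the identity, each commuting exactly with `D`. -/
def IsBlockDiagonal {H : Type} [NormedAddCommGroup H] [InnerProductSpace ℂ H]
    [CompleteSpace H] (D : H →L[ℂ] H) : Prop :=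
  ∃ P : ℕ → H →L[ℂ] H,
    (∀ n, IsSelfAdjoint (P n)) ∧
    (∀ n, IsIdempotentElem (P n)) ∧
    (∀ n, FiniteDimensional ℂ (LinearMap.range (P n : H →ₗ[ℂ] H))) ∧
    (∀ n, P (n + 1) * P n = P n) ∧
    (∀ x : H, Tendsto (fun n => P n x) atTop (𝓝 x)) ∧
    (∀ n, P n * D = D * P n)

/-- Halmos' theorem: an operator is quasidiagonal iff it is a compact
perturbation of a block diagonal operator. -/
theorem isQuasidiagonal_iff_blockDiagonal_add_compact
    (H : Type) [NormedAddCommGroup H] [InnerProductSpace ℂ H] [CompleteSpace H]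
    [TopologicalSpace.SeparableSpace H] (hinf : ¬ FiniteDimensional ℂ H)
    (T : H →L[ℂ] H) :
    IsQuasidiagonal T ↔
      ∃ D K : H →L[ℂ] H, T = D + K ∧ IsCompactOperator (⇑K) ∧ IsBlockDiagonal D := by
  constructor
  · rintro ⟨P₀, hsa₀, hid₀, hfin₀, hm₀, hst₀, hcomm₀⟩
    -- extract a rapidly commuting subsequence
    have hev : ∀ k : ℕ, ∀ᶠ n in atTop, ‖P₀ n * T - T * P₀ n‖ ≤ (1/2 : ℝ)^k := fun k =>
      (hcomm₀.eventually_lt_const (by positivity)).mono fun n h => h.le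
    obtain ⟨φ, hφmono, hφ⟩ := Filter.extraction_forall_of_eventually hev
    -- the new projection sequence, starting with 0
    set P : ℕ → H →L[ℂ] H := fun n => Nat.casesOn n 0 (fun m => P₀ (φ m)) with hPdef
    have hP0 : P 0 = 0 := rfl
    have hPs : ∀ m, P (m+1) = P₀ (φ m) := fun _ => rfl
    have hsa : ∀ n, IsSelfAdjoint (P n) := by
      rintro (_|m)
      · rw [hP0]; exact IsSelfAdjoint.zero _
      · exact hsa₀ _
    have hid : ∀ n, IsIdempotentElem (P n) := by
      rintro (_|m)
      · rw [hP0]; exact IsIdempotentElem.zero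
      · exact hid₀ _
    have hfin : ∀ n, FiniteDimensional ℂ (LinearMap.range (P n : H →ₗ[ℂ] H)) := by
      rintro (_|m)
      · have hbot : LinearMap.range (P 0 : H →ₗ[ℂ] H) = ⊥ := by
          rw [Submodule.eq_bot_iff]
          rintro y ⟨x, rfl⟩
          rw [hP0]; rfl
        rw [hbot]; infer_instance
      · exact hfin₀ _
    have hm : ∀ n, P (n+1) * P n = P n := by
      rintro (_|m)
      · rw [hP0]; exact mul_zero _
      · exact aux_mono hid₀ hm₀ (φ m) (φ (m+1)) (hφmono.monotone (Nat.le_succ m))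
    have hst : ∀ x : H, Tendsto (fun n => P n x) atTop (𝓝 x) := by
      intro x
      have h1 : Tendsto (fun n => P (n+1) x) atTop (𝓝 x) :=
        (hst₀ x).comp hφmono.tendsto_atTop
      exact (tendsto_add_atTop_iff_nat 1).mp h1
    have hPm := aux_mono hid hm
    have hPm' := aux_mono' hsa hid hm
    have hcB : ∀ n, ‖P (n+1) * T - T * P (n+1)‖ ≤ (1/2:ℝ)^n := fun n => hφ n
    -- the blocks
    set Q : ℕ → H →L[ℂ] H := fun n => P (n+1) - P n with hQ
    have hQP : ∀ n m, m ≤ n → P m * Q n = 0 ∧ Q n * P m = 0 := by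
      intro n m h
      constructor
      · show P m * (P (n+1) - P n) = 0
        rw [mul_sub, hPm' m (n+1) (h.trans (n.le_succ)), hPm' m n h, sub_self]
      · show (P (n+1) - P n) * P m = 0
        rw [sub_mul, hPm m (n+1) (h.trans (n.le_succ)), hPm m n h, sub_self]
    have hQP' : ∀ n m, n + 1 ≤ m → P m * Q n = Q n ∧ Q n * P m = Q n := by
      intro n m h
      constructor
      · show P m * (P (n+1) - P n) = P (n+1) - P n
        rw [mul_sub, hPm (n+1) m h, hPm n m (n.le_succ.trans h)]
      · show (P (n+1) - P n) * P m = P (n+1) - P n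
        rw [sub_mul, hPm' (n+1) m h, hPm' n m (n.le_succ.trans h)]
    have hQid : ∀ n, IsIdempotentElem (Q n) := by
      intro n
      show Q n * Q n = Q n
      conv_lhs => rw [show Q n * Q n = P (n+1) * Q n - P n * Q n from by rw [hQ]; exact sub_mul _ _ _]
      rw [(hQP' n (n+1) le_rfl).1, (hQP n n le_rfl).1, sub_zero]
    have hQsa : ∀ n, IsSelfAdjoint (Q n) := fun n => (hsa (n+1)).sub (hsa n)
    have hQn1 : ∀ n, ‖Q n‖ ≤ 1 := fun n => aux_norm_le_one (hQsa n) (hQid n)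
    have hPn1 : ∀ n, ‖P n‖ ≤ 1 := fun n => aux_norm_le_one (hsa n) (hid n)
    -- the off-diagonal pieces
    set A : ℕ → H →L[ℂ] H := fun n => Q n * T - Q n * T * Q n with hA
    have hAbound : ∀ n, ‖A n‖ ≤ ‖P n * T - T * P n‖ + ‖P (n+1) * T - T * P (n+1)‖ := by
      intro n
      have e1 : A n = Q n * T * P n + Q n * T * (1 - P (n+1)) := by
        rw [hA, hQ]; noncomm_ring
      have key : Q n * (T * P n - P n * T) * P n = Q n * T * P n := by
        have h1 : Q n * P n = 0 := (hQP n n le_rfl).2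
        have h2 : P n * P n = P n := hid n
        calc Q n * (T * P n - P n * T) * P n
            = Q n * T * (P n * P n) - (Q n * P n) * (T * P n) := by noncomm_ring
          _ = Q n * T * P n := by rw [h1, h2, zero_mul, sub_zero, mul_assoc]
      have key2 : Q n * (P (n+1) * T - T * P (n+1)) * (1 - P (n+1))
          = Q n * T * (1 - P (n+1)) := by
        have h1 : Q n * P (n+1) = Q n := (hQP' n (n+1) le_rfl).2
        have h2 : P (n+1) * P (n+1) = P (n+1) := hid (n+1)
        calc Q n * (P (n+1) * T - T * P (n+1)) * (1 - P (n+1))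
            = (Q n * P (n+1)) * (T * (1 - P (n+1)))
              - Q n * T * (P (n+1) - P (n+1) * P (n+1)) := by noncomm_ring
          _ = Q n * T * (1 - P (n+1)) := by
              rw [h1, h2, sub_self, mul_zero, sub_zero, mul_assoc]
      have b1 : ‖Q n * T * P n‖ ≤ ‖P n * T - T * P n‖ := by
        rw [← key]
        calc ‖Q n * (T * P n - P n * T) * P n‖
            ≤ ‖Q n‖ * ‖T * P n - P n * T‖ * ‖P n‖ := by
              refine le_trans (norm_mul_le _ _) ?_
              gcongr
              exact norm_mul_le _ _
          _ ≤ 1 * ‖T * P n - P n * T‖ * 1 :=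
              mul_le_mul (mul_le_mul (hQn1 n) le_rfl (norm_nonneg _) zero_le_one)
                (hPn1 n) (norm_nonneg _) (by positivity)
          _ = ‖P n * T - T * P n‖ := by rw [one_mul, mul_one, norm_sub_rev]
      have b2 : ‖Q n * T * (1 - P (n+1))‖ ≤ ‖P (n+1) * T - T * P (n+1)‖ := by
        rw [← key2]
        have hone : ‖(1 : H →L[ℂ] H) - P (n+1)‖ ≤ 1 := by
          refine aux_norm_le_one ?_ (hid (n+1)).one_sub
          exact (IsSelfAdjoint.one _).sub (hsa (n+1))
        calc ‖Q n * (P (n+1) * T - T * P (n+1)) * (1 - P (n+1))‖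
            ≤ ‖Q n‖ * ‖P (n+1) * T - T * P (n+1)‖ * ‖(1:H →L[ℂ] H) - P (n+1)‖ := by
              refine le_trans (norm_mul_le _ _) ?_
              gcongr
              exact norm_mul_le _ _
          _ ≤ 1 * ‖P (n+1) * T - T * P (n+1)‖ * 1 :=
              mul_le_mul (mul_le_mul (hQn1 n) le_rfl (norm_nonneg _) zero_le_one)
                hone (norm_nonneg _) (by positivity)
          _ = ‖P (n+1) * T - T * P (n+1)‖ := by rw [one_mul, mul_one]
      calc ‖A n‖ = ‖Q n * T * P n + Q n * T * (1 - P (n+1))‖ := by rw [e1]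
        _ ≤ ‖Q n * T * P n‖ + ‖Q n * T * (1 - P (n+1))‖ := norm_add_le _ _
        _ ≤ _ := add_le_add b1 b2
    -- summability
    have hs1 : Summable (fun n : ℕ => ‖P (n+1) * T - T * P (n+1)‖) :=
      Summable.of_nonneg_of_le (fun n => norm_nonneg _) hcB
        (summable_geometric_of_lt_one (by norm_num) (by norm_num))
    have hs0 : Summable (fun n : ℕ => ‖P n * T - T * P n‖) := by
      rw [← summable_nat_add_iff 1]
      exact hs1
    have hAsble : Summable (fun n => ‖A n‖) :=
      Summable.of_nonneg_of_le (fun n => norm_nonneg _) hAbound (hs0.add hs1)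
    have hAs : Summable A := Summable.of_norm hAsble
    set K : H →L[ℂ] H := ∑' n, A n with hK
    set D : H →L[ℂ] H := T - K with hD
    -- compactness of each piece
    have hAc : ∀ n, IsCompactOperator ⇑(A n) := by
      intro n
      apply aux_finrank_compact
      have hfix : P (n+1) * A n = A n := by
        have h1 : P (n+1) * Q n = Q n := (hQP' n (n+1) le_rfl).1
        calc P (n+1) * A n
            = (P (n+1) * Q n) * T - ((P (n+1) * Q n) * T) * Q n := by rw [hA]; noncomm_ring
          _ = A n := by rw [h1, hA]
      have hle : LinearMap.range (A n : H →ₗ[ℂ] H) ≤ LinearMap.range (P (n+1) : H →ₗ[ℂ] H) := by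
        rintro y ⟨x, rfl⟩
        exact ⟨A n x, DFunLike.congr_fun hfix x⟩
      haveI := hfin (n+1)
      exact Submodule.finiteDimensional_of_le hle
    -- compactness of K
    have hKc : IsCompactOperator ⇑K := by
      have htend : Tendsto (fun N => ∑ n ∈ Finset.range N, A n) atTop (𝓝 K) :=
        hAs.hasSum.tendsto_sum_nat
      refine isCompactOperator_of_tendsto htend (Eventually.of_forall fun N => ?_)
      induction N with
      | zero =>
        simp only [Finset.range_zero, Finset.sum_empty]
        exact isCompactOperator_zero
      | succ N ih =>
        rw [Finset.sum_range_succ]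
        have : (⇑(∑ n ∈ Finset.range N, A n + A N) : H → H)
            = ⇑(∑ n ∈ Finset.range N, A n) + ⇑(A N) := by
          ext x; simp
        rw [this]
        exact ih.add (hAc N)
    -- commutation
    have hcomm : ∀ m, P m * K - K * P m = P m * T - T * P m := by
      intro m
      have hAl : ∀ n, P m * A n = if n < m then A n else 0 := by
        intro n
        by_cases h : n < m
        · have h1 : P m * Q n = Q n := (hQP' n m h).1
          rw [if_pos h]
          calc P m * A n
              = (P m * Q n) * T - ((P m * Q n) * T) * Q n := by rw [hA]; noncomm_ring
            _ = A n := by rw [h1, hA]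
        · have h1 : P m * Q n = 0 := (hQP n m (Nat.le_of_not_lt h)).1
          rw [if_neg h]
          calc P m * A n
              = (P m * Q n) * T - ((P m * Q n) * T) * Q n := by rw [hA]; noncomm_ring
            _ = 0 := by rw [h1, zero_mul, zero_mul, sub_zero]
      have hleft : P m * K = ∑ n ∈ Finset.range m, A n := by
        rw [hK, ← hAs.tsum_mul_left (P m)]
        rw [tsum_eq_sum (s := Finset.range m)
          (fun n hn => by rw [hAl n, if_neg (fun h => hn (Finset.mem_range.mpr h))])]
        exact Finset.sum_congr rfl fun n hn => by
          rw [hAl n, if_pos (Finset.mem_range.mp hn)]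
      have hg : ∀ n, A n * P m = Q n * T * P m - (if n < m then Q n * T * Q n else 0) := by
        intro n
        by_cases h : n < m
        · have h1 : Q n * P m = Q n := (hQP' n m h).2
          rw [if_pos h]
          calc A n * P m
              = Q n * T * P m - Q n * T * (Q n * P m) := by rw [hA]; noncomm_ring
            _ = _ := by rw [h1]
        · have h1 : Q n * P m = 0 := (hQP n m (Nat.le_of_not_lt h)).2
          rw [if_neg h]
          calc A n * P m
              = Q n * T * P m - Q n * T * (Q n * P m) := by rw [hA]; noncomm_ring
            _ = _ := by rw [h1, mul_zero]
      have hsum_ite : Summable (fun n => if n < m then Q n * T * Q n else 0) :=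
        summable_of_ne_finset_zero (s := Finset.range m)
          (fun n hn => if_neg (fun hc => hn (Finset.mem_range.mpr hc)))
      have hsumAP : Summable (fun n => A n * P m) := hAs.mul_right (P m)
      have hsumQTP : Summable (fun n => Q n * T * P m) := by
        have he : (fun n => Q n * T * P m)
            = fun n => A n * P m + (if n < m then Q n * T * Q n else 0) := by
          funext n
          rw [hg n, sub_add_cancel]
        rw [he]
        exact hsumAP.add hsum_ite
      have hQTP : ∑' n, Q n * T * P m = T * P m := by
        have h1 : Tendsto (fun N => ∑ n ∈ Finset.range N, Q n * T * P m) atTop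
            (𝓝 (∑' n, Q n * T * P m)) := hsumQTP.hasSum.tendsto_sum_nat
        have h2 : ∀ N, ∑ n ∈ Finset.range N, Q n * T * P m = P N * (T * P m) := by
          intro N
          calc ∑ n ∈ Finset.range N, Q n * T * P m
              = ∑ n ∈ Finset.range N, (P (n+1) * (T * P m) - P n * (T * P m)) := by
                refine Finset.sum_congr rfl fun n _ => ?_
                rw [hQ]; noncomm_ring
            _ = P N * (T * P m) - P 0 * (T * P m) :=
                Finset.sum_range_sub (fun n => P n * (T * P m)) N
            _ = P N * (T * P m) := by rw [hP0, zero_mul, sub_zero]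
        ext x
        have e1 : Tendsto (fun N => (∑ n ∈ Finset.range N, Q n * T * P m) x) atTop
            (𝓝 ((∑' n, Q n * T * P m) x)) :=
          ((ContinuousLinearMap.apply ℂ H x).continuous.tendsto _).comp h1
        have e2 : Tendsto (fun N => (∑ n ∈ Finset.range N, Q n * T * P m) x) atTop
            (𝓝 ((T * P m) x)) := by
          have := hst ((T * P m) x)
          refine Tendsto.congr (fun N => ?_) this
          rw [h2 N]; rfl
        exact (tendsto_nhds_unique e1 e2)
      have hright : K * P m = T * P m - ∑ n ∈ Finset.range m, Q n * T * Q n := by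
        rw [hK, ← hAs.tsum_mul_right (P m)]
        calc ∑' n, A n * P m
            = ∑' n, (Q n * T * P m - (if n < m then Q n * T * Q n else 0)) := tsum_congr hg
          _ = (∑' n, Q n * T * P m) - ∑' n, (if n < m then Q n * T * Q n else 0) :=
              Summable.tsum_sub hsumQTP hsum_ite
          _ = T * P m - ∑ n ∈ Finset.range m, Q n * T * Q n := by
              rw [hQTP, tsum_eq_sum (s := Finset.range m)
                (fun n hn => if_neg (fun h => hn (Finset.mem_range.mpr h)))]
              congr 1
              exact Finset.sum_congr rfl fun n hn => if_pos (Finset.mem_range.mp hn)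
      have hleft' : ∑ n ∈ Finset.range m, A n
          = P m * T - ∑ n ∈ Finset.range m, Q n * T * Q n := by
        have hterm : ∀ n, A n = (P (n+1) * T - P n * T) - Q n * T * Q n := by
          intro n
          rw [hA, hQ]
          noncomm_ring
        calc ∑ n ∈ Finset.range m, A n
            = ∑ n ∈ Finset.range m, ((P (n+1) * T - P n * T) - Q n * T * Q n) :=
              Finset.sum_congr rfl fun n _ => hterm n
          _ = (∑ n ∈ Finset.range m, (P (n+1) * T - P n * T))
              - ∑ n ∈ Finset.range m, Q n * T * Q n := Finset.sum_sub_distrib _ _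
          _ = P m * T - ∑ n ∈ Finset.range m, Q n * T * Q n := by
              rw [Finset.sum_range_sub (fun n => P n * T) m, hP0, zero_mul, sub_zero]
      rw [hleft, hright, hleft']
      abel
    refine ⟨D, K, ?_, hKc, ⟨P, hsa, hid, hfin, hm, hst, ?_⟩⟩
    · rw [hD]; abel
    · intro n
      have h := hcomm n
      have h2 : P n * D - D * P n = 0 := by
        have e : P n * D - D * P n = (P n * T - T * P n) - (P n * K - K * P n) := by
          rw [hD]; noncomm_ring
        rw [e, h, sub_self]
      exact sub_eq_zero.mp h2
  · rintro ⟨D, K, hT, hKc, P, hsa, hid, hfin, hm, hst, hcD⟩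
    refine ⟨P, hsa, hid, hfin, hm, hst, ?_⟩
    have hbd : ∀ n, ‖P n‖ ≤ 1 := fun n => aux_norm_le_one (hsa n) (hid n)
    have h1 := aux_left K hKc P hbd hst
    have h2 := aux_right K hKc P hsa hbd hst
    have hb : ∀ n, ‖P n * T - T * P n‖ ≤ ‖P n * K - K‖ + ‖K * P n - K‖ := by
      intro n
      have heq : P n * T - T * P n = (P n * K - K) - (K * P n - K) := by
        rw [hT]
        have hd := hcD n
        calc P n * (D + K) - (D + K) * P n
            = (P n * D - D * P n) + (P n * K - K * P n) := by noncomm_ring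
          _ = (P n * K - K) - (K * P n - K) := by rw [hd]; abel
      rw [heq]
      exact norm_sub_le _ _
    have hlim : Tendsto (fun n => ‖P n * K - K‖ + ‖K * P n - K‖) atTop (𝓝 0) := by
      simpa using h1.add h2
    exact squeeze_zero (fun n => norm_nonneg _) hb hlim
end

section
/- The unilateral shift S on ℓ²(ℕ, ℂ), defined by (Sx)(0) = 0 and (Sx)(n+1) = x(n), is not a quasidiagonal operator. -/
open Filter Topology

set_option maxHeartbeats 1000000

section Aux

abbrev ℓ2 : Type := lp (fun _ : ℕ => ℂ) 2

noncomputable def e₀ : ℓ2 := lp.single 2 0 (1 : ℂ)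

lemma norm_e₀ : ‖e₀‖ = 1 := by
  have := lp.norm_single (p := 2) (E := fun _ : ℕ => ℂ)
    (by norm_num) 0 (1 : ℂ)
  simpa [e₀] using this

-- S is an isometry
lemma shift_isometry (S : ℓ2 →L[ℂ] ℓ2)
    (h0 : ∀ x : ℓ2, S x 0 = 0)
    (hshift : ∀ (x : ℓ2) (n : ℕ), S x (n + 1) = x n) (x : ℓ2) :
    ‖S x‖ = ‖x‖ := by
  have hsum : Summable fun i => (inner ℂ ((S x) i) ((S x) i) : ℂ) :=
    lp.summable_inner (𝕜 := ℂ) (S x) (S x)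
  have h1 : (inner ℂ (S x) (S x) : ℂ) = inner ℂ x x := by
    rw [lp.inner_eq_tsum, lp.inner_eq_tsum]
    rw [Summable.tsum_eq_zero_add hsum]
    simp only [h0, hshift, inner_zero_left, zero_add]
  have h3 : (‖S x‖ : ℝ) ^ 2 = (‖x‖ : ℝ) ^ 2 := by
    rw [← inner_self_eq_norm_sq (𝕜 := ℂ), ← inner_self_eq_norm_sq (𝕜 := ℂ), h1]
  nlinarith [norm_nonneg (S x), norm_nonneg x]

lemma shift_orth (S : ℓ2 →L[ℂ] ℓ2)
    (h0 : ∀ x : ℓ2, S x 0 = 0) (x : ℓ2) :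
    (inner ℂ (S x) e₀ : ℂ) = 0 := by
  rw [e₀, lp.inner_single_right]
  simp [h0]

lemma proj_norm_le {H : Type} [NormedAddCommGroup H] [InnerProductSpace ℂ H]
    [CompleteSpace H] (P : H →L[ℂ] H) (hsa : IsSelfAdjoint P)
    (hid : IsIdempotentElem P) (x : H) : ‖P x‖ ≤ ‖x‖ := by
  have h1 : (inner ℂ (P x) (P x) : ℂ) = inner ℂ x (P x) := by
    have := ContinuousLinearMap.adjoint_inner_left P (P x) x
    rw [hsa.adjoint_eq] at this
    have hPP : P (P x) = P x := by
      have h := congrArg (fun T : H →L[ℂ] H => T x) hid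
      simpa using h
    rw [hPP] at this
    exact this
  have h2 : ‖P x‖ ^ 2 ≤ ‖x‖ * ‖P x‖ := by
    calc ‖P x‖ ^ 2 = RCLike.re (inner ℂ (P x) (P x) : ℂ) := (inner_self_eq_norm_sq _).symm
      _ = RCLike.re (inner ℂ x (P x) : ℂ) := by rw [h1]
      _ ≤ ‖(inner ℂ x (P x) : ℂ)‖ := RCLike.re_le_norm _
      _ ≤ ‖x‖ * ‖P x‖ := norm_inner_le_norm _ _
  rcases eq_or_lt_of_le (norm_nonneg (P x)) with h | h
  · rw [← h]; exact norm_nonneg x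
  · nlinarith [h2]

end Aux


set_option maxHeartbeats 1000000

/-- The unilateral shift on `ℓ²(ℕ, ℂ)` — i.e. any bounded operator `S` satisfying
`(S x) 0 = 0` and `(S x) (n+1) = x n` — is not quasidiagonal. -/
theorem unilateral_shift_not_quasidiagonal
    (S : lp (fun _ : ℕ => ℂ) 2 →L[ℂ] lp (fun _ : ℕ => ℂ) 2)
    (h0 : ∀ x : lp (fun _ : ℕ => ℂ) 2, S x 0 = 0)
    (hshift : ∀ (x : lp (fun _ : ℕ => ℂ) 2) (n : ℕ), S x (n + 1) = x n) :
    ¬ IsQuasidiagonal S := by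
  rintro ⟨P, hsa, hid, hfin, -, hsot, hcomm⟩
  -- pick n with small commutator and P n e₀ close to e₀
  have h1 : ∀ᶠ n in atTop, ‖P n * S - S * P n‖ < 1/4 :=
    hcomm.eventually (eventually_lt_nhds (by norm_num : (0:ℝ) < 1/4))
  have h2 : ∀ᶠ n in atTop, ‖P n e₀ - e₀‖ < 1/4 := by
    have := (hsot e₀).eventually (Metric.ball_mem_nhds e₀ (by norm_num : (0:ℝ) < 1/4))
    filter_upwards [this] with n hn
    simpa [dist_eq_norm] using hn
  obtain ⟨n, hc, he⟩ := (h1.and h2).exists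
  set Q := P n with hQ
  have hQsa := hsa n
  have hQid := hid n
  have hQfin := hfin n
  -- key small-commutator estimate
  have hcomm' : ∀ v : ℓ2, ‖Q (S v) - S (Q v)‖ ≤ (1/4) * ‖v‖ := by
    intro v
    have h := (Q * S - S * Q).le_opNorm v
    have : (Q * S - S * Q) v = Q (S v) - S (Q v) := rfl
    rw [this] at h
    calc ‖Q (S v) - S (Q v)‖ ≤ ‖Q * S - S * Q‖ * ‖v‖ := h
      _ ≤ (1/4) * ‖v‖ := by
          apply mul_le_mul_of_nonneg_right hc.le (norm_nonneg v)
  -- for v fixed by Q, ‖Q (S v)‖ ≥ (3/4) ‖v‖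
  have key : ∀ v : ℓ2, Q v = v → (3/4) * ‖v‖ ≤ ‖Q (S v)‖ := by
    intro v hv
    have h1 : ‖S v‖ = ‖v‖ := shift_isometry S h0 hshift v
    have h2 : ‖S v - Q (S v)‖ ≤ (1/4) * ‖v‖ := by
      have := hcomm' v
      rw [hv] at this
      calc ‖S v - Q (S v)‖ = ‖Q (S v) - S v‖ := norm_sub_rev _ _
        _ ≤ (1/4) * ‖v‖ := this
    have h3 : ‖v‖ ≤ ‖Q (S v)‖ + (1/4) * ‖v‖ := by
      calc ‖v‖ = ‖S v‖ := h1.symm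
        _ = ‖Q (S v) + (S v - Q (S v))‖ := by congr 1; abel
        _ ≤ ‖Q (S v)‖ + ‖S v - Q (S v)‖ := norm_add_le _ _
        _ ≤ ‖Q (S v)‖ + (1/4) * ‖v‖ := by linarith
    linarith
  -- range of Q and the compression map
  set V := LinearMap.range (Q : ℓ2 →ₗ[ℂ] ℓ2) with hV
  have hmemfix : ∀ x : ℓ2, x ∈ V → Q x = x := by
    rintro x ⟨w, rfl⟩
    have := congrArg (fun T : ℓ2 →L[ℂ] ℓ2 => T w) hQid
    simpa using this
  let A : V →ₗ[ℂ] V :=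
    { toFun := fun v => ⟨Q (S v), LinearMap.mem_range_self _ _⟩
      map_add' := by intro a b; ext; simp
      map_smul' := by intro c a; ext; simp }
  have hAinj : Function.Injective A := by
    rw [injective_iff_map_eq_zero]
    intro v hv
    have hQv : Q (v : ℓ2) = v := hmemfix _ v.2
    have h1 : Q (S (v : ℓ2)) = 0 := congrArg Subtype.val hv
    have h2 := key (v : ℓ2) hQv
    rw [h1] at h2
    simp only [norm_zero] at h2
    have : ‖(v : ℓ2)‖ = 0 := le_antisymm (by linarith) (norm_nonneg _)
    ext1
    simpa using norm_eq_zero.mp this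
  have hAsurj : Function.Surjective A :=
    LinearMap.surjective_of_injective (by exact hAinj)
  obtain ⟨v, hv⟩ := hAsurj ⟨Q e₀, LinearMap.mem_range_self _ _⟩
  have hveq : Q (S (v : ℓ2)) = Q e₀ := congrArg Subtype.val hv
  have hQv : Q (v : ℓ2) = v := hmemfix _ v.2
  -- norm bound on v
  have hQe₀ : ‖Q e₀‖ ≤ 1 := by
    have := proj_norm_le Q hQsa hQid e₀
    rw [norm_e₀] at this; exact this
  have hvnorm : ‖(v : ℓ2)‖ ≤ 4/3 := by
    have := key (v : ℓ2) hQv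
    rw [hveq] at this
    linarith
  -- upper bound on ‖S v - e₀‖
  have hup : ‖S (v : ℓ2) - e₀‖ ≤ 7/12 := by
    have h1 : ‖S (v : ℓ2) - Q (S (v : ℓ2))‖ ≤ (1/4) * ‖(v : ℓ2)‖ := by
      have := hcomm' (v : ℓ2)
      rw [hQv] at this
      calc ‖S (v:ℓ2) - Q (S (v:ℓ2))‖ = ‖Q (S (v:ℓ2)) - S (v:ℓ2)‖ := norm_sub_rev _ _
        _ ≤ (1/4) * ‖(v:ℓ2)‖ := this
    calc ‖S (v : ℓ2) - e₀‖
        = ‖(S (v:ℓ2) - Q (S (v:ℓ2))) + (Q (S (v:ℓ2)) - e₀)‖ := by congr 1; abel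
      _ ≤ ‖S (v:ℓ2) - Q (S (v:ℓ2))‖ + ‖Q (S (v:ℓ2)) - e₀‖ := norm_add_le _ _
      _ = ‖S (v:ℓ2) - Q (S (v:ℓ2))‖ + ‖Q e₀ - e₀‖ := by rw [hveq]
      _ ≤ (1/4) * ‖(v:ℓ2)‖ + (1/4) := by linarith [he]
      _ ≤ (1/4) * (4/3) + 1/4 := by linarith
      _ = 7/12 := by norm_num
  -- lower bound on ‖S v - e₀‖ via orthogonality
  have hlow : (1:ℝ) ≤ ‖S (v : ℓ2) - e₀‖ ^ 2 := by
    have horth := shift_orth S h0 (v : ℓ2)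
    have := norm_sub_sq (𝕜 := ℂ) (S (v : ℓ2)) e₀
    rw [horth] at this
    simp only [map_zero, mul_zero, sub_zero] at this
    rw [this, norm_e₀]
    nlinarith [sq_nonneg ‖S (v : ℓ2)‖]
  nlinarith [norm_nonneg (S (v : ℓ2) - e₀)]
end
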